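/- arXiv:1907.03657 — 6 statements merged into one kernel-verified Lean document; each statement's English description precedes it below -/
import Mathlib

section
/- Fix a finite graph H on vertex set V. Consider the following nondeterministic process producing a set S ⊆ V: start with S = ∅, and repeatedly, (a) if some v ∈ S has exactly one or two neighbors W in V \ S, replace S by S ∪ W, or (b) if some v ∈ V \ S has at most two neighbors in V \ S, replace S by S ∪ {v} ∪ (N(v) \ S). Then the terminal set S_L (reached when no rule applies) is independent of the order in which vertices are chosen: any two maximal executions of this process terminate with the same set. -/
open scoped Classical

variable {V : Type*}

/-- One step of the set-growing process on a graph `G`: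
(a) some `v ∈ S` has exactly one or two neighbors outside `S`, and they are added; or
(b) some `v ∉ S` has at most two neighbors outside `S`, and `v` together with its
neighbors outside `S` is added. -/
def GrowStep [Fintype V] [DecidableEq V] (G : SimpleGraph V) (S S' : Finset V) : Prop :=
  (∃ v ∈ S, ((G.neighborFinset v \ S).card = 1 ∨ (G.neighborFinset v \ S).card = 2) ∧
      S' = S ∪ (G.neighborFinset v \ S)) ∨
  (∃ v ∉ S, (G.neighborFinset v \ S).card ≤ 2 ∧
      S' = insert v (S ∪ (G.neighborFinset v \ S)))

/-- If `T` is terminal and `v ∈ T`, then the neighbors of `v` outside `S ⊆ T`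
(with at most two of them) are all in `T`. -/
lemma nbhd_subset_of_terminal [Fintype V] [DecidableEq V] (G : SimpleGraph V)
    {S T : Finset V} (hST : S ⊆ T) (tT : ∀ S', ¬ GrowStep G T S')
    {v : V} (hv : v ∈ T) (hcard : (G.neighborFinset v \ S).card ≤ 2) :
    G.neighborFinset v \ S ⊆ T := by
  have hsub : G.neighborFinset v \ T ⊆ G.neighborFinset v \ S :=
    Finset.sdiff_subset_sdiff (le_refl _) hST
  have hc : (G.neighborFinset v \ T).card ≤ 2 :=
    le_trans (Finset.card_le_card hsub) hcard
  have hzero : (G.neighborFinset v \ T).card = 0 := by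
    interval_cases h : (G.neighborFinset v \ T).card
    · rfl
    · exact absurd (Or.inl ⟨v, hv, Or.inl h, rfl⟩) (tT _)
    · exact absurd (Or.inl ⟨v, hv, Or.inr h, rfl⟩) (tT _)
  have hempty : G.neighborFinset v \ T = ∅ := Finset.card_eq_zero.mp hzero
  intro x hx
  have hx' : x ∈ G.neighborFinset v := (Finset.mem_sdiff.mp hx).1
  by_contra hxT
  exact absurd (Finset.mem_sdiff.mpr ⟨hx', hxT⟩) (by simp [hempty])

/-- A step from a subset of a terminal set stays within the terminal set. -/
lemma step_subset_of_terminal [Fintype V] [DecidableEq V] (G : SimpleGraph V)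
    {S S' T : Finset V} (hST : S ⊆ T) (tT : ∀ S', ¬ GrowStep G T S')
    (h : GrowStep G S S') : S' ⊆ T := by
  rcases h with ⟨v, hvS, hcard, rfl⟩ | ⟨v, hvS, hcard, rfl⟩
  · have hc2 : (G.neighborFinset v \ S).card ≤ 2 := by omega
    exact Finset.union_subset hST
      (nbhd_subset_of_terminal G hST tT (hST hvS) hc2)
  · have hvT : v ∈ T := by
      by_contra hvT
      have hsub : G.neighborFinset v \ T ⊆ G.neighborFinset v \ S :=
        Finset.sdiff_subset_sdiff (le_refl _) hST
      have hc : (G.neighborFinset v \ T).card ≤ 2 :=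
        le_trans (Finset.card_le_card hsub) hcard
      exact absurd (Or.inr ⟨v, hvT, hc, rfl⟩) (tT _)
    exact Finset.insert_subset hvT
      (Finset.union_subset hST (nbhd_subset_of_terminal G hST tT hvT hcard))

lemma reaches_subset_of_terminal [Fintype V] [DecidableEq V] (G : SimpleGraph V)
    {S T : Finset V} (h : Relation.ReflTransGen (GrowStep G) ∅ S)
    (tT : ∀ S', ¬ GrowStep G T S') : S ⊆ T := by
  induction h with
  | refl => exact Finset.empty_subset T
  | tail _ hstep ih => exact step_subset_of_terminal G ih tT hstep

/-- Confluence of the process: any two maximal executions starting from `∅`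
terminate with the same set. -/
theorem growStep_confluent [Fintype V] [DecidableEq V] (G : SimpleGraph V)
    (S₁ S₂ : Finset V)
    (h₁ : Relation.ReflTransGen (GrowStep G) ∅ S₁)
    (h₂ : Relation.ReflTransGen (GrowStep G) ∅ S₂)
    (t₁ : ∀ S', ¬ GrowStep G S₁ S')
    (t₂ : ∀ S', ¬ GrowStep G S₂ S') :
    S₁ = S₂ :=
  Finset.Subset.antisymm (reaches_subset_of_terminal G h₁ t₂)
    (reaches_subset_of_terminal G h₂ t₁)
end

section
/- Fix a finite graph H on vertex set V and run the set-growing process: S_0 = ∅, and S_{ℓ+1} = S_ℓ ∪ {v} ∪ (N(v) \ S_ℓ) where v is a vertex such that either v ∈ S_ℓ has at most two neighbors outside S_ℓ, or v ∉ S_ℓ has at most two neighbors outside S_ℓ. Then for every ℓ and every connected component K of the subgraph induced by S_ℓ, the number of vertices of K having no neighbor in V \ K is at least |V(K)|/3. -/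
open scoped Classical

variable {V : Type*}

/-- `K` is (the vertex set of) a connected component of the subgraph of `G`
induced by `S`: `K ⊆ S`, the induced subgraph on `K` is connected, and no vertex
of `K` is adjacent to a vertex of `S \ K`. -/
def IsInducedComponent [Fintype V] (G : SimpleGraph V) (S K : Finset V) : Prop :=
  K ⊆ S ∧ (G.induce (K : Set V)).Connected ∧
    ∀ u ∈ K, ∀ w ∈ S, G.Adj u w → w ∈ K

section Aux
set_option linter.unusedSectionVars false

variable [Fintype V] [DecidableEq V] (G : SimpleGraph V)

/-- One step of a path inside `S`. -/
def stepRel (S : Finset V) (a b : V) : Prop := a ∈ S ∧ b ∈ S ∧ G.Adj a b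

/-- The connected component of `u` in the subgraph induced on `S`, as a `Finset`. -/
noncomputable def comp (S : Finset V) (u : V) : Finset V :=
  S.filter (fun w => Relation.ReflTransGen (stepRel G S) u w)

variable {G}

lemma reach_symm {S : Finset V} {a b : V}
    (h : Relation.ReflTransGen (stepRel G S) a b) :
    Relation.ReflTransGen (stepRel G S) b a := by
  induction h with
  | refl => exact .refl
  | tail h1 h2 ih => exact Relation.ReflTransGen.head ⟨h2.2.1, h2.1, h2.2.2.symm⟩ ih

lemma mem_comp {S : Finset V} {u w : V} :
    w ∈ comp G S u ↔ w ∈ S ∧ Relation.ReflTransGen (stepRel G S) u w := by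
  simp [comp]

lemma mem_comp_self {S : Finset V} {u : V} (hu : u ∈ S) : u ∈ comp G S u :=
  mem_comp.mpr ⟨hu, .refl⟩

lemma comp_subset {S : Finset V} {u : V} : comp G S u ⊆ S := Finset.filter_subset _ _

lemma comp_eq_of_mem {S : Finset V} {u w : V} (hw : w ∈ comp G S u) :
    comp G S u = comp G S w := by
  obtain ⟨hwS, hr⟩ := mem_comp.mp hw
  ext x
  simp only [mem_comp]
  exact ⟨fun ⟨hx, h⟩ => ⟨hx, (reach_symm hr).trans h⟩, fun ⟨hx, h⟩ => ⟨hx, hr.trans h⟩⟩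

/-- closure of `K` under reach-steps (in a possibly smaller set `S ⊆ S'`). -/
lemma reach_closed {S S' K : Finset V} (hSS : S ⊆ S')
    (hcl : ∀ u ∈ K, ∀ w ∈ S', G.Adj u w → w ∈ K) {u w : V} (hu : u ∈ K)
    (h : Relation.ReflTransGen (stepRel G S) u w) : w ∈ K := by
  induction h with
  | refl => exact hu
  | tail h1 h2 ih => exact hcl _ ih _ (hSS h2.2.1) h2.2.2

lemma walk_to_reach {S K : Finset V} (hKS : K ⊆ S) :
    ∀ {a b : (K : Set V)}, (G.induce (K : Set V)).Walk a b →
      Relation.ReflTransGen (stepRel G S) a.1 b.1 := by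
  intro a b p
  induction p with
  | nil => exact .refl
  | @cons x y z h p ih =>
      exact Relation.ReflTransGen.head
        ⟨hKS (Finset.mem_coe.mp x.2), hKS (Finset.mem_coe.mp y.2), by simpa using h⟩ ih

lemma comp_isInducedComponent {S : Finset V} {u : V} (hu : u ∈ S) :
    IsInducedComponent G S (comp G S u) := by
  have hreach : ∀ x, Relation.ReflTransGen (stepRel G S) u x → ∀ hx : x ∈ comp G S u,
      (G.induce ((comp G S u : Finset V) : Set V)).Reachable
        ⟨u, Finset.mem_coe.mpr (mem_comp_self hu)⟩ ⟨x, Finset.mem_coe.mpr hx⟩ := by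
    intro x hr
    induction hr with
    | refl => intro _; exact SimpleGraph.Reachable.refl _
    | @tail b c h1 h2 ih =>
        intro hc
        have hb : b ∈ comp G S u := mem_comp.mpr ⟨h2.1, h1⟩
        have hadj : (G.induce ((comp G S u : Finset V) : Set V)).Adj
            ⟨b, Finset.mem_coe.mpr hb⟩ ⟨c, Finset.mem_coe.mpr hc⟩ := by
          simpa using h2.2.2
        exact (ih hb).trans hadj.reachable
  refine ⟨comp_subset, ?_, ?_⟩
  · rw [SimpleGraph.connected_iff]
    refine ⟨fun a b => ?_, ⟨⟨u, Finset.mem_coe.mpr (mem_comp_self hu)⟩⟩⟩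
    have ha := hreach a.1 (mem_comp.mp (Finset.mem_coe.mp a.2)).2 (Finset.mem_coe.mp a.2)
    have hb := hreach b.1 (mem_comp.mp (Finset.mem_coe.mp b.2)).2 (Finset.mem_coe.mp b.2)
    exact ha.symm.trans hb
  · intro x hx w hw hadj
    obtain ⟨hxS, hr⟩ := mem_comp.mp hx
    exact mem_comp.mpr ⟨hw, hr.tail ⟨hxS, hw, hadj⟩⟩

lemma component_eq_comp {S K : Finset V} (hK : IsInducedComponent G S K) {u : V}
    (hu : u ∈ K) : K = comp G S u := by
  obtain ⟨hKS, hconn, hcl⟩ := hK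
  apply Finset.Subset.antisymm
  · intro w hw
    obtain ⟨p⟩ := hconn.preconnected ⟨u, Finset.mem_coe.mpr hu⟩ ⟨w, Finset.mem_coe.mpr hw⟩
    exact mem_comp.mpr ⟨hKS hw, walk_to_reach hKS p⟩
  · intro w hw
    obtain ⟨hwS, hr⟩ := mem_comp.mp hw
    exact reach_closed (le_refl S) hcl hu hr

end Aux

/-- Along the set-growing process (each step adds a vertex `v` with at most two
neighbors outside the current set, together with those neighbors), every
connected component `K` of the induced subgraph has at least `|K|/3` vertices
with no neighbor outside `K` in `G`. -/
theorem component_many_internal_vertices [Fintype V] [DecidableEq V]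
    (G : SimpleGraph V) (S : ℕ → Finset V) (hS0 : S 0 = ∅)
    (hstep : ∀ ℓ : ℕ, ∃ v : V, (G.neighborFinset v \ S ℓ).card ≤ 2 ∧
      S (ℓ + 1) = insert v (S ℓ ∪ (G.neighborFinset v \ S ℓ)))
    (ℓ : ℕ) (K : Finset V) (hK : IsInducedComponent G (S ℓ) K) :
    K.card ≤ 3 * (K.filter (fun u => ∀ w : V, G.Adj u w → w ∈ K)).card := by
  induction ℓ generalizing K with
  | zero =>
      have h1 := hK.1
      rw [hS0] at h1
      have : K = ∅ := Finset.subset_empty.mp h1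
      simp [this]
  | succ ℓ ih =>
      obtain ⟨v, hv2, hSsucc⟩ := hstep ℓ
      set D := G.neighborFinset v \ S ℓ with hD
      have hSsub : S ℓ ⊆ S (ℓ+1) := by
        rw [hSsucc]; intro x hx; exact Finset.mem_insert_of_mem (Finset.mem_union_left _ hx)
      by_cases hsub : K ⊆ S ℓ
      · exact ih K ⟨hsub, hK.2.1, fun u hu w hw adj => hK.2.2 u hu w (hSsub hw) adj⟩
      · obtain ⟨a, haK, haS⟩ := Finset.not_subset.mp hsub
        have hKsub : K ⊆ S (ℓ+1) := hK.1
        have haA : a = v ∨ a ∈ D := by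
          have h := hKsub haK
          rw [hSsucc] at h
          rcases Finset.mem_insert.mp h with h | h
          · exact Or.inl h
          · rcases Finset.mem_union.mp h with h | h
            · exact absurd h haS
            · exact Or.inr h
        have hvS1 : v ∈ S (ℓ+1) := by rw [hSsucc]; exact Finset.mem_insert_self _ _
        have hvK : v ∈ K := by
          rcases haA with rfl | h
          · exact haK
          · have hadj : G.Adj v a := (SimpleGraph.mem_neighborFinset _ _ _).mp
              (Finset.mem_sdiff.mp h).1
            exact hK.2.2 a haK v hvS1 hadj.symm
        have hvint : ∀ w : V, G.Adj v w → w ∈ K := by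
          intro w hw
          have hwS : w ∈ S (ℓ+1) := by
            rw [hSsucc]
            by_cases hwS : w ∈ S ℓ
            · exact Finset.mem_insert_of_mem (Finset.mem_union_left _ hwS)
            · exact Finset.mem_insert_of_mem (Finset.mem_union_right _
                (Finset.mem_sdiff.mpr ⟨(SimpleGraph.mem_neighborFinset _ _ _).mpr hw, hwS⟩))
          exact hK.2.2 v hvK w hwS hw
        set Kold := K ∩ S ℓ with hKoldDef
        have hcompK : ∀ u ∈ Kold, comp G (S ℓ) u ⊆ Kold := by
          intro u hu w hw
          obtain ⟨hwS, hr⟩ := mem_comp.mp hw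
          exact Finset.mem_inter.mpr
            ⟨reach_closed hSsub hK.2.2 (Finset.mem_inter.mp hu).1 hr, hwS⟩
        set T := Kold.image (fun u => comp G (S ℓ) u) with hTdef
        have hTd : ∀ C ∈ T, ∀ C' ∈ T, C ≠ C' → Disjoint C C' := by
          intro C hC C' hC' hne
          rw [Finset.disjoint_left]
          intro x hxC hxC'
          obtain ⟨u, hu, rfl⟩ := Finset.mem_image.mp hC
          obtain ⟨u', hu', rfl⟩ := Finset.mem_image.mp hC'
          exact hne ((comp_eq_of_mem hxC).trans (comp_eq_of_mem hxC').symm)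
        have hTK : ∀ C ∈ T, C ⊆ Kold := by
          intro C hC
          obtain ⟨u, hu, rfl⟩ := Finset.mem_image.mp hC
          exact hcompK u hu
        have hKoldU : Kold = T.biUnion id := by
          apply Finset.Subset.antisymm
          · intro u hu
            exact Finset.mem_biUnion.mpr ⟨comp G (S ℓ) u, Finset.mem_image_of_mem _ hu,
              mem_comp_self (Finset.mem_inter.mp hu).2⟩
          · intro x hx
            obtain ⟨C, hC, hxC⟩ := Finset.mem_biUnion.mp hx
            exact hTK C hC hxC
        have hKoldcard : Kold.card = ∑ C ∈ T, C.card := by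
          rw [hKoldU]; exact Finset.card_biUnion hTd
        set I' := T.biUnion (fun C => C.filter (fun u => ∀ w : V, G.Adj u w → w ∈ C))
          with hI'def
        have hI'card : I'.card
            = ∑ C ∈ T, (C.filter (fun u => ∀ w : V, G.Adj u w → w ∈ C)).card :=
          Finset.card_biUnion (fun C hC C' hC' hne =>
            (hTd C hC C' hC' hne).mono (Finset.filter_subset _ _) (Finset.filter_subset _ _))
        have hsum : Kold.card ≤ 3 * I'.card := by
          rw [hKoldcard, hI'card, Finset.mul_sum]
          apply Finset.sum_le_sum
          intro C hC
          obtain ⟨u, hu, rfl⟩ := Finset.mem_image.mp hC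
          exact ih _ (comp_isInducedComponent (Finset.mem_inter.mp hu).2)
        have hI'sub : I' ⊆ K.filter (fun u => ∀ w : V, G.Adj u w → w ∈ K) := by
          intro u hu
          obtain ⟨C, hC, huC⟩ := Finset.mem_biUnion.mp hu
          obtain ⟨huC', hint⟩ := Finset.mem_filter.mp huC
          have hCK : C ⊆ K := (hTK C hC).trans Finset.inter_subset_left
          exact Finset.mem_filter.mpr ⟨hCK huC', fun w hw => hCK (hint w hw)⟩
        have hKsplit : Kold.card + (K \ S ℓ).card = K.card := by
          rw [hKoldDef]; exact Finset.card_inter_add_card_sdiff _ _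
        by_cases hvI : v ∈ I'
        · obtain ⟨C, hC, hvC⟩ := Finset.mem_biUnion.mp hvI
          obtain ⟨hvC', hvint'⟩ := Finset.mem_filter.mp hvC
          have hCS : C ⊆ S ℓ := (hTK C hC).trans Finset.inter_subset_right
          have hnew : K \ S ℓ = ∅ := by
            rw [Finset.eq_empty_iff_forall_notMem]
            intro u hu
            obtain ⟨huK, huS⟩ := Finset.mem_sdiff.mp hu
            have h := hKsub huK
            rw [hSsucc] at h
            rcases Finset.mem_insert.mp h with rfl | h
            · exact huS (hCS hvC')
            · rcases Finset.mem_union.mp h with h | h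
              · exact huS h
              · exact huS (hCS (hvint' u
                  ((SimpleGraph.mem_neighborFinset _ _ _).mp (Finset.mem_sdiff.mp h).1)))
          have hcardI : I'.card ≤ (K.filter (fun u => ∀ w : V, G.Adj u w → w ∈ K)).card :=
            Finset.card_le_card hI'sub
          have hnewcard : (K \ S ℓ).card = 0 := by rw [hnew]; simp
          omega
        · have hDcard : (K \ S ℓ).card ≤ 3 := by
            have hsub3 : K \ S ℓ ⊆ insert v D := by
              intro u hu
              obtain ⟨huK, huS⟩ := Finset.mem_sdiff.mp hu
              have h := hKsub huK
              rw [hSsucc] at h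
              rcases Finset.mem_insert.mp h with rfl | h
              · exact Finset.mem_insert_self _ _
              · rcases Finset.mem_union.mp h with h | h
                · exact absurd h huS
                · exact Finset.mem_insert_of_mem h
            calc (K \ S ℓ).card ≤ (insert v D).card := Finset.card_le_card hsub3
              _ ≤ D.card + 1 := Finset.card_insert_le _ _
              _ ≤ 3 := by omega
          have hins : (insert v I').card
              ≤ (K.filter (fun u => ∀ w : V, G.Adj u w → w ∈ K)).card := by
            apply Finset.card_le_card
            intro u hu
            rcases Finset.mem_insert.mp hu with rfl | h
            · exact Finset.mem_filter.mpr ⟨hvK, hvint⟩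
            · exact hI'sub h
          have h1 : (insert v I').card = I'.card + 1 := Finset.card_insert_of_notMem hvI
          omega
end

section
/- For constants c and p = c/n, the expected number of vertex subsets S of G_{n,p} of size s, 4 ≤ s ≤ n/(10c^3), that span at least 3s/2 edges is at most the sum over s of (e^{5/2} c^{3/2} s^{1/2} / (3^{3/2} n^{1/2}))^s, which tends to 0 as n → ∞. -/
open MeasureTheory Filter
open scoped Classical

/-- Bernoulli measure on `Bool` with success probability `min p 1`. -/
noncomputable def bern (p : ℝ) : Measure Bool :=
  (PMF.bernoulli (min (Real.toNNReal p) 1) (min_le_right _ _)).toMeasure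

/-- The Erdős–Rényi random graph `G_{n,p}`, modeled as the product Bernoulli
measure on edge-indicator functions indexed by unordered pairs of `Fin n`. -/
noncomputable def gnp (n : ℕ) (p : ℝ) : Measure (Sym2 (Fin n) → Bool) :=
  Measure.pi fun _ => bern p

/-- The simple graph on `Fin n` determined by an edge-indicator function. -/
def graphOf {n : ℕ} (ω : Sym2 (Fin n) → Bool) : SimpleGraph (Fin n) where
  Adj u v := u ≠ v ∧ ω s(u, v) = true
  symm := by
    constructor
    intro u v h
    exact ⟨h.1.symm, by rw [Sym2.eq_swap]; exact h.2⟩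
  loopless := by constructor; intro v h; exact h.1 rfl

/-- The number of edges of the random graph spanned by a vertex set `S`. -/
noncomputable def edgeIn {n : ℕ} (ω : Sym2 (Fin n) → Bool) (S : Finset (Fin n)) : ℕ :=
  ((graphOf ω).edgeFinset.filter fun e => ∀ v ∈ e, v ∈ S).card

/-- The per-size term `(e^{5/2} c^{3/2} s^{1/2} / (3^{3/2} n^{1/2}))^s` in the
first-moment bound. -/
noncomputable def densTerm (c : ℝ) (n s : ℕ) : ℝ :=
  (Real.exp ((5 : ℝ) / 2) * c ^ ((3 : ℝ) / 2) * Real.sqrt s /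
    ((3 : ℝ) ^ ((3 : ℝ) / 2) * Real.sqrt n)) ^ s

/-- The number of vertex sets `S` with `4 ≤ |S| ≤ n/(10c³)` spanning at least
`3|S|/2` edges. -/
noncomputable def denseSetCount (n : ℕ) (c : ℝ) (ω : Sym2 (Fin n) → Bool) : ℕ :=
  (Finset.univ.filter fun S : Finset (Fin n) =>
    4 ≤ S.card ∧ (S.card : ℝ) ≤ n / (10 * c ^ 3) ∧
      3 * (S.card : ℝ) / 2 ≤ (edgeIn ω S : ℝ)).card


/-! First moment method. A fixed `s`-set spans at least `m = ⌈3s/2⌉` edges only if some `m` of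
its `C(s,2)` pairs are all edges, which has probability at most `C(C(s,2), m) pᵐ`. With
`C(a,k) ≤ (ea/k)ᵏ` and `C(s,2)/m ≤ s/3`, the `C(n,s)` sets of size `s` contribute at most
`(en/s)ˢ Xᵐ ≤ ((en/s) X^{3/2})ˢ` where `X = esc/(3n) ≤ 1`, and `(en/s) X^{3/2}` is exactly the base
of `densTerm c n s`. For the limit, `s ≤ n/(10c³)` bounds that base by `√(e⁵/270) < 1`, so the
terms are dominated by a convergent geometric series, while each fixed term tends to `0` like
`n^{-s/2}`; dominated convergence finishes. -/

open Finset

section Bernoulli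

variable {ι : Type*} [Fintype ι] (p : ℝ)

instance : IsProbabilityMeasure (bern p) := by
  unfold bern; infer_instance

lemma bern_true_le : bern p {true} ≤ ENNReal.ofReal p := by
  rw [bern, PMF.toMeasure_apply_singleton _ _ (measurableSet_singleton _), ENNReal.ofReal]
  exact ENNReal.coe_le_coe.2 (min_le_left _ _)

lemma pi_bern_forall_mem_le (T : Finset ι) :
    Measure.pi (fun _ : ι => bern p) {ω | ∀ i ∈ T, ω i = true} ≤ ENNReal.ofReal p ^ #T := by
  have hcyl : {ω : ι → Bool | ∀ i ∈ T, ω i = true} =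
      Set.univ.pi fun i => if i ∈ (T : Set ι) then {true} else Set.univ := by
    rw [Set.pi_univ_ite]
    ext ω
    simp
  rw [hcyl, Measure.pi_pi]
  simp only [Finset.mem_coe, apply_ite (bern p), measure_univ]
  rw [prod_ite_mem, univ_inter, prod_const]
  gcongr
  exact bern_true_le p

lemma pi_bern_real_le_choose_mul_pow (hp : 0 ≤ p) (E : Finset ι) (m : ℕ) :
    (Measure.pi fun _ : ι => bern p).real {ω | m ≤ #{i ∈ E | ω i = true}} ≤
      (#E).choose m * p ^ m := by
  have hcover : {ω : ι → Bool | m ≤ #{i ∈ E | ω i = true}} ⊆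
      ⋃ T ∈ E.powersetCard m, {ω | ∀ i ∈ T, ω i = true} := by
    intro ω hω
    obtain ⟨T, hTE, hT⟩ := Finset.exists_subset_card_eq hω
    simp only [Set.mem_iUnion, mem_powersetCard]
    exact ⟨T, ⟨hTE.trans (filter_subset _ _), hT⟩, fun i hi => (mem_filter.1 (hTE hi)).2⟩
  apply ENNReal.toReal_le_of_le_ofReal (by positivity)
  calc Measure.pi (fun _ : ι => bern p) {ω | m ≤ #{i ∈ E | ω i = true}}
      ≤ ∑ T ∈ E.powersetCard m, Measure.pi (fun _ : ι => bern p) {ω | ∀ i ∈ T, ω i = true} :=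
        (measure_mono hcover).trans (measure_biUnion_finset_le _ _)
    _ ≤ ∑ T ∈ E.powersetCard m, ENNReal.ofReal p ^ m := by
        gcongr with T hT
        exact (mem_powersetCard.1 hT).2 ▸ pi_bern_forall_mem_le p T
    _ = ENNReal.ofReal ((#E).choose m * p ^ m) := by
        rw [sum_const, card_powersetCard, nsmul_eq_mul, ENNReal.ofReal_mul (by positivity),
          ENNReal.ofReal_pow hp, ENNReal.ofReal_natCast]

end Bernoulli

lemma integral_card_filter {Ω α : Type*} [MeasurableSpace Ω] [MeasurableSingletonClass Ω]
    [Finite Ω] (μ : Measure Ω) [IsFiniteMeasure μ] (A : Finset α) (P : α → Ω → Prop)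
    [∀ a ω, Decidable (P a ω)] :
    ∫ ω, (#{a ∈ A | P a ω} : ℝ) ∂μ = ∑ a ∈ A, μ.real {ω | P a ω} := by
  simp only [card_filter, Nat.cast_sum, Nat.cast_ite, Nat.cast_one, Nat.cast_zero]
  rw [integral_finsetSum _ fun _ _ => Integrable.of_finite]
  refine sum_congr rfl fun a _ => ?_
  rw [← integral_indicator_one (Set.toFinite _).measurableSet]
  simp only [Set.indicator_apply, Set.mem_ofPred_eq, Pi.one_apply]

lemma edgeIn_le_card_filter {n : ℕ} (ω : Sym2 (Fin n) → Bool) (S : Finset (Fin n)) :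
    edgeIn ω S ≤ #{e ∈ S.offDiag.image (Function.uncurry Sym2.mk) | ω e = true} := by
  refine card_le_card fun e he => ?_
  simp only [mem_filter, SimpleGraph.mem_edgeFinset] at he
  obtain ⟨hadj, hmem⟩ := he
  induction e with
  | _ u v =>
    obtain ⟨huv, hω⟩ : u ≠ v ∧ ω s(u, v) = true := hadj
    refine mem_filter.2 ⟨mem_image.2 ⟨(u, v), ?_, rfl⟩, hω⟩
    exact mem_offDiag.2 ⟨hmem u (Sym2.mem_mk_left u v), hmem v (Sym2.mem_mk_right u v), huv⟩

instance (n : ℕ) (p : ℝ) : IsProbabilityMeasure (gnp n p) := by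
  unfold gnp; infer_instance

lemma gnp_real_le_choose_mul_pow {n : ℕ} {p : ℝ} (hp : 0 ≤ p) (S : Finset (Fin n)) (m : ℕ) :
    (gnp n p).real {ω | m ≤ edgeIn ω S} ≤ ((#S).choose 2).choose m * p ^ m := by
  rw [← Sym2.card_image_offDiag]
  refine le_trans (measureReal_mono fun ω (hω : m ≤ edgeIn ω S) => ?_)
    (pi_bern_real_le_choose_mul_pow p hp _ m)
  exact hω.trans (edgeIn_le_card_filter ω S)

open Real

lemma Nat.choose_le_exp_one_mul_div_pow (a k : ℕ) : (a.choose k : ℝ) ≤ (exp 1 * a / k) ^ k := by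
  rcases k.eq_zero_or_pos with rfl | hk
  · simp
  have hfact : (k : ℝ) ^ k / k.factorial ≤ exp 1 ^ k := by
    rw [← exp_nat_mul, mul_one]
    exact pow_div_factorial_le_exp _ k.cast_nonneg k
  calc (a.choose k : ℝ) ≤ a ^ k / k.factorial := Nat.choose_le_pow_div k a
    _ = (a / k) ^ k * ((k : ℝ) ^ k / k.factorial) := by rw [div_pow]; field_simp
    _ ≤ (a / k) ^ k * exp 1 ^ k := by gcongr
    _ = (exp 1 * a / k) ^ k := by ring

lemma choose_choose_two_mul_pow_le {s m : ℕ} (hs : 0 < s) (hm : 3 * (s : ℝ) / 2 ≤ m)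
    {x : ℝ} (hx : 0 ≤ x) :
    ((s.choose 2).choose m : ℝ) * x ^ m ≤ (exp 1 * s * x / 3) ^ m := by
  have hs' : (0 : ℝ) < s := by exact_mod_cast hs
  have hm' : (0 : ℝ) < m := by linarith
  have hratio : ((s.choose 2 : ℕ) : ℝ) / m ≤ s / 3 := by
    rw [Nat.cast_choose_two, div_le_div_iff₀ hm' three_pos]
    nlinarith
  calc ((s.choose 2).choose m : ℝ) * x ^ m
      ≤ (exp 1 * (s.choose 2 : ℕ) / m) ^ m * x ^ m := by
        gcongr; exact Nat.choose_le_exp_one_mul_div_pow _ _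
    _ = (exp 1 * (((s.choose 2 : ℕ) : ℝ) / m) * x) ^ m := by rw [← mul_pow, mul_div_assoc]
    _ ≤ (exp 1 * (s / 3) * x) ^ m := by gcongr
    _ = (exp 1 * s * x / 3) ^ m := by ring

lemma exp_one_mul_mul_le_three_mul {c s n : ℝ} (hc : 0 < c) (hs : 0 ≤ s) (hsn : s ≤ n)
    (hcond : s ≤ n / (10 * c ^ 3)) : exp 1 * s * c ≤ 3 * n := by
  rw [le_div_iff₀ (by positivity)] at hcond
  have he := exp_one_lt_three
  rcases le_total c 1 with hc1 | hc1
  · nlinarith [mul_le_mul_of_nonneg_left hc1 hs, mul_nonneg hs hc.le]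
  · nlinarith [mul_le_mul_of_nonneg_left (le_self_pow₀ hc1 (by norm_num : 3 ≠ 0)) hs,
      mul_nonneg hs hc.le]

noncomputable def densBase (c : ℝ) (n s : ℕ) : ℝ :=
  exp (5 / 2) * c ^ ((3 : ℝ) / 2) * √s / (3 ^ ((3 : ℝ) / 2) * √n)

lemma densTerm_eq_densBase_pow (c : ℝ) (n s : ℕ) : densTerm c n s = densBase c n s ^ s := rfl

lemma densBase_nonneg {c : ℝ} (hc : 0 ≤ c) (n s : ℕ) : 0 ≤ densBase c n s := by
  unfold densBase; positivity

lemma rpow_three_halves_sq {x : ℝ} (hx : 0 ≤ x) : (x ^ ((3 : ℝ) / 2)) ^ 2 = x ^ 3 := by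
  rw [← rpow_natCast, ← rpow_mul hx]
  norm_num

lemma densBase_sq {c : ℝ} (hc : 0 ≤ c) (n s : ℕ) :
    densBase c n s ^ 2 = exp 5 * c ^ 3 * s / (27 * n) := by
  rw [densBase, div_pow, mul_pow, mul_pow, mul_pow, rpow_three_halves_sq hc,
    rpow_three_halves_sq zero_le_three, sq_sqrt s.cast_nonneg, sq_sqrt n.cast_nonneg,
    ← exp_nat_mul]
  norm_num

lemma densBase_eq {c : ℝ} (hc : 0 ≤ c) {n s : ℕ} (hs : 0 < s) (hn : 0 < n) :
    densBase c n s = exp 1 * n / s * √(exp 1 * s * (c / n) / 3) ^ 3 := by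
  refine (pow_left_inj₀ (densBase_nonneg hc n s) (by positivity) two_ne_zero).1 ?_
  rw [densBase_sq hc, mul_pow, ← pow_mul, mul_comm 3 2, pow_mul, sq_sqrt (by positivity),
    show exp 5 = exp 1 ^ 5 by rw [← exp_nat_mul]; norm_num]
  field_simp
  ring

lemma choose_mul_choose_mul_pow_le_densTerm {c : ℝ} (hc : 0 < c) {n s m : ℕ} (hs : 0 < s)
    (hsn : s ≤ n) (hcond : (s : ℝ) ≤ n / (10 * c ^ 3)) (hm : 3 * (s : ℝ) / 2 ≤ m) :
    (n.choose s : ℝ) * ((s.choose 2).choose m * (c / n) ^ m) ≤ densTerm c n s := by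
  have hn : 0 < n := hs.trans_le hsn
  set X := exp 1 * s * (c / n) / 3 with hX
  have hX1 : X ≤ 1 := by
    rw [hX, div_le_one three_pos, ← mul_div_assoc, div_le_iff₀ (by positivity)]
    exact exp_one_mul_mul_le_three_mul hc s.cast_nonneg (by exact_mod_cast hsn) hcond
  have hXm : X ^ m ≤ (√X ^ 3) ^ s := by
    have h3s : 3 * s ≤ 2 * m := by exact_mod_cast (by linarith : (3 * s : ℝ) ≤ 2 * m)
    rw [← pow_mul, show X ^ m = √X ^ (2 * m) by rw [pow_mul, sq_sqrt (by positivity)]]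
    exact pow_le_pow_of_le_one (sqrt_nonneg X) (sqrt_le_one.2 hX1) h3s
  calc (n.choose s : ℝ) * ((s.choose 2).choose m * (c / n) ^ m)
      ≤ (exp 1 * n / s) ^ s * X ^ m := by
        gcongr
        · exact Nat.choose_le_exp_one_mul_div_pow n s
        · exact choose_choose_two_mul_pow_le hs hm (by positivity)
    _ ≤ (exp 1 * n / s) ^ s * (√X ^ 3) ^ s := by gcongr
    _ = densTerm c n s := by rw [← mul_pow, ← densBase_eq hc.le hs hn]; rfl

lemma integral_denseSetCount_le {c : ℝ} (hc : 0 < c) (n : ℕ) :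
    ∫ ω, (denseSetCount n c ω : ℝ) ∂gnp n (c / n) ≤
      ∑ s ∈ Icc 4 n, (if (s : ℝ) ≤ n / (10 * c ^ 3) then densTerm c n s else 0) := by
  set bound : ℕ → ℝ := fun s => if 4 ≤ s ∧ (s : ℝ) ≤ n / (10 * c ^ 3) then
    (s.choose 2).choose ⌈3 * (s : ℝ) / 2⌉₊ * (c / n) ^ ⌈3 * (s : ℝ) / 2⌉₊ else 0 with hbound
  have hS : ∀ S : Finset (Fin n), (gnp n (c / n)).real {ω | 4 ≤ #S ∧
      (#S : ℝ) ≤ n / (10 * c ^ 3) ∧ 3 * (#S : ℝ) / 2 ≤ edgeIn ω S} ≤ bound #S := by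
    intro S
    simp only [hbound]
    by_cases hQ : 4 ≤ #S ∧ (#S : ℝ) ≤ n / (10 * c ^ 3)
    · rw [if_pos hQ]
      refine le_trans (measureReal_mono fun ω hω => ?_)
        (gnp_real_le_choose_mul_pow (by positivity) S _)
      exact Nat.ceil_le.2 hω.2.2
    · rw [if_neg hQ, ← measureReal_empty (μ := gnp n (c / n))]
      exact measureReal_mono fun ω hω => hQ ⟨hω.1, hω.2.1⟩
  have hIcc : Icc 4 n ⊆ range (n + 1) := fun s hs => by
    simp only [mem_Icc, mem_range] at hs ⊢; omega
  calc ∫ ω, (denseSetCount n c ω : ℝ) ∂gnp n (c / n)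
      ≤ ∑ S : Finset (Fin n), bound #S :=
        (integral_card_filter _ _ _).trans_le (sum_le_sum fun S _ => hS S)
    _ = ∑ s ∈ range (n + 1), n.choose s * bound s := by
        rw [← powerset_univ, sum_powerset_apply_card, card_univ, Fintype.card_fin]
        simp only [nsmul_eq_mul]
    _ = ∑ s ∈ Icc 4 n, n.choose s * bound s := by
        refine (sum_subset hIcc fun s hs hsIcc => ?_).symm
        simp only [hbound]
        rw [if_neg fun h => hsIcc (mem_Icc.2 ⟨h.1, by simpa [Nat.lt_succ_iff] using hs⟩),
          mul_zero]
    _ ≤ _ := by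
        refine sum_le_sum fun s hs => ?_
        obtain ⟨h4s, hsn⟩ := mem_Icc.1 hs
        simp only [hbound]
        by_cases hcond : (s : ℝ) ≤ n / (10 * c ^ 3)
        · rw [if_pos ⟨h4s, hcond⟩, if_pos hcond]
          exact choose_mul_choose_mul_pow_le_densTerm hc (by omega) hsn hcond (Nat.le_ceil _)
        · rw [if_neg fun h => hcond h.2, if_neg hcond, mul_zero]

lemma densBase_le_sqrt {c : ℝ} (hc : 0 < c) {n s : ℕ} (hcond : (s : ℝ) ≤ n / (10 * c ^ 3)) :
    densBase c n s ≤ √(exp 5 / 270) := by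
  rw [le_sqrt (densBase_nonneg hc.le n s) (by positivity), densBase_sq hc.le,
    show exp 5 * c ^ 3 * s / (27 * n) = exp 5 / 270 * (10 * c ^ 3 * s / n) by ring]
  rw [le_div_iff₀ (by positivity)] at hcond
  exact mul_le_of_le_one_right (by positivity) (div_le_one_of_le₀ (by linarith) n.cast_nonneg)

lemma sqrt_exp_five_div_lt_one : √(exp 5 / 270) < 1 := by
  rw [sqrt_lt' one_pos, one_pow, div_lt_one (by norm_num),
    show (5 : ℝ) = (5 : ℕ) * 1 by norm_num, exp_nat_mul]
  calc exp 1 ^ 5 < 3 ^ 5 := by gcongr; exact exp_one_lt_three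
    _ < 270 := by norm_num

lemma densTerm_le_pow {c : ℝ} (hc : 0 < c) {n s : ℕ} (hcond : (s : ℝ) ≤ n / (10 * c ^ 3)) :
    densTerm c n s ≤ √(exp 5 / 270) ^ s :=
  pow_le_pow_left₀ (densBase_nonneg hc.le n s) (densBase_le_sqrt hc hcond) s

lemma tendsto_densTerm_atTop (c : ℝ) {s : ℕ} (hs : s ≠ 0) :
    Tendsto (fun n : ℕ => densTerm c n s) atTop (nhds 0) := by
  have hbase : Tendsto (fun n : ℕ => densBase c n s) atTop (nhds 0) :=
    tendsto_const_nhds.div_atTop <|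
      (tendsto_sqrt_atTop.comp tendsto_natCast_atTop_atTop).const_mul_atTop (by positivity)
  simpa [densTerm_eq_densBase_pow, zero_pow hs] using hbase.pow s

lemma tendsto_sum_densTerm {c : ℝ} (hc : 0 < c) :
    Tendsto (fun n : ℕ => ∑ s ∈ Icc 4 n,
      (if (s : ℝ) ≤ n / (10 * c ^ 3) then densTerm c n s else 0)) atTop (nhds 0) := by
  set g : ℕ → ℕ → ℝ := fun n s => if (s : ℝ) ≤ n / (10 * c ^ 3) then densTerm c n s else 0
  have hg : ∀ n s, 0 ≤ g n s ∧ g n s ≤ densTerm c n s ∧ g n s ≤ √(exp 5 / 270) ^ s := by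
    intro n s
    have h0 : 0 ≤ densTerm c n s := pow_nonneg (densBase_nonneg hc.le n s) s
    by_cases hcond : (s : ℝ) ≤ n / (10 * c ^ 3)
    · simp only [g, if_pos hcond]
      exact ⟨h0, le_rfl, densTerm_le_pow hc hcond⟩
    · simp only [g, if_neg hcond]
      exact ⟨le_rfl, h0, by positivity⟩
  have hind : ∀ n s, 0 ≤ (Icc 4 n : Set ℕ).indicator (g n) s ∧
      (Icc 4 n : Set ℕ).indicator (g n) s ≤ g n s := fun n s =>
    ⟨Set.indicator_nonneg (fun s _ => (hg n s).1) s,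
      Set.indicator_le_self' (fun s _ => (hg n s).1) s⟩
  have key := tendsto_tsum_of_dominated_convergence (𝓕 := atTop) (g := fun _ => (0 : ℝ))
    (f := fun n s => (Icc 4 n : Set ℕ).indicator (g n) s)
    (summable_geometric_of_lt_one (sqrt_nonneg _) sqrt_exp_five_div_lt_one) (fun s => ?_)
    (Eventually.of_forall fun n s => ?_)
  · simpa only [tsum_zero, ← sum_eq_tsum_indicator] using key
  · rcases eq_or_ne s 0 with rfl | hs
    · simp
    · exact squeeze_zero (fun n => (hind n s).1) (fun n => (hind n s).2.trans (hg n s).2.1)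
        (tendsto_densTerm_atTop c hs)
  · rw [Real.norm_of_nonneg (hind n s).1]
    exact (hind n s).2.trans (hg n s).2.2

/-- The expected number of vertex sets `S` of `G_{n,c/n}` with
`4 ≤ |S| = s ≤ n/(10c³)` spanning at least `3s/2` edges is at most
`Σ_s (e^{5/2} c^{3/2} s^{1/2}/(3^{3/2} n^{1/2}))^s`, and this sum tends to `0`
as `n → ∞`. -/
theorem expected_dense_sets (c : ℝ) (hc : 0 < c) :
    (∀ n : ℕ, c ≤ n →
      ∫ ω, (denseSetCount n c ω : ℝ) ∂ gnp n (c / n) ≤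
        ∑ s ∈ Finset.Icc 4 n,
          (if (s : ℝ) ≤ n / (10 * c ^ 3) then densTerm c n s else 0)) ∧
    Tendsto (fun n : ℕ => ∑ s ∈ Finset.Icc 4 n,
        (if (s : ℝ) ≤ n / (10 * c ^ 3) then densTerm c n s else 0))
      atTop (nhds 0) :=
  ⟨fun n _ => integral_denseSetCount_le hc n, tendsto_sum_densTerm hc⟩
end

section
/- Let T be a tree in which every leaf is marked, and suppose we seek a collection of vertex-disjoint paths in T (paths of length 0 allowed) whose endpoints are all marked vertices, covering as many vertices as possible; let φ(T) be the number of uncovered vertices in an optimal such collection. If every vertex of T has degree at most 2 (i.e., T is a path), then φ(T) = 0. More generally, if T has at most 6 vertices and every vertex of degree 1 in T is marked, then φ(T) = 0; the smallest tree with all leaves marked and φ(T) > 0 has 7 vertices, namely three paths of length two sharing a common endpoint where only the three leaves are marked. -/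
/-!
A packing covers every vertex iff each unmarked vertex has degree exactly 2 in it; since all
leaves are marked, it suffices to find `F ≤ T` in which every non-leaf vertex of `T` has degree
exactly 2. Such an `F` exists as soon as every vertex has at most two non-leaf neighbours (`T` is a
caterpillar): let each vertex pick two of its neighbours, including all non-leaf ones, and keep
the edges picked from both ends. Paths are caterpillars, and so is every tree on at most 6
vertices, because the degree sum of a tree forces `2 * #(non-leaf neighbours of v) < |V|`.
In the spider, the three middle vertices are unmarked of degree 2, so a covering packing would
contain all their edges and give the centre degree 3.
-/

open scoped Classical

variable {V : Type*}

/-- A valid path packing of a graph `T` with marked set `B`, encoded as a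
spanning linear forest `F ≤ T`: every vertex has `F`-degree at most 2, `F` is
acyclic (so its components are paths), and every endpoint of a nontrivial path
(an `F`-degree-1 vertex) is marked. The covered vertices are those on a path:
vertices of positive `F`-degree, together with `F`-isolated marked vertices
(paths of length 0). -/
def IsGoodPacking [Fintype V] (T F : SimpleGraph V) (B : Set V) : Prop :=
  F ≤ T ∧ F.IsAcyclic ∧ (∀ v : V, F.degree v ≤ 2) ∧
    ∀ v : V, F.degree v = 1 → v ∈ B

/-- A packing covers all of `T` iff every unmarked vertex lies on a path. -/
def CoversAll [Fintype V] (F : SimpleGraph V) (B : Set V) : Prop :=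
  ∀ v : V, F.degree v = 0 → v ∈ B

/-- The 7-vertex spider: three paths of length two sharing the common endpoint
`0`; its leaves are `4, 5, 6`. -/
def spider : SimpleGraph (Fin 7) :=
  SimpleGraph.fromRel (fun u v =>
    (u, v) ∈ [((0 : Fin 7), (1 : Fin 7)), (0, 2), (0, 3), (1, 4), (2, 5), (3, 6)])

open Finset

namespace SimpleGraph

variable [Fintype V] {T : SimpleGraph V}

noncomputable def nonLeafNeighborFinset (T : SimpleGraph V) (v : V) : Finset V :=
  {w ∈ T.neighborFinset v | 2 ≤ T.degree w}

lemma mem_nonLeafNeighborFinset {v w : V} :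
    w ∈ T.nonLeafNeighborFinset v ↔ T.Adj v w ∧ 2 ≤ T.degree w := by
  simp [nonLeafNeighborFinset]

lemma card_nonLeafNeighborFinset_le_degree (v : V) :
    #(T.nonLeafNeighborFinset v) ≤ T.degree v :=
  (card_filter_le _ _).trans_eq (card_neighborFinset_eq_degree _ _)

lemma exists_le_degree_eq_two_of_card_nonLeafNeighborFinset_le_two
    (hT : ∀ v, #(T.nonLeafNeighborFinset v) ≤ 2) :
    ∃ F ≤ T, ∀ v, 2 ≤ T.degree v → F.degree v = 2 := by
  have hS : ∀ v, ∃ S : Finset V, T.nonLeafNeighborFinset v ⊆ S ∧ S ⊆ T.neighborFinset v ∧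
      #S = min 2 (T.degree v) := fun v =>
    exists_subsuperset_card_eq (filter_subset _ _)
      (le_min (hT v) (card_nonLeafNeighborFinset_le_degree v))
      (by simp)
  choose S hNS hST hcard using hS
  let F : SimpleGraph V :=
    { Adj u w := T.Adj u w ∧ w ∈ S u ∧ u ∈ S w
      symm := ⟨fun _ _ h => ⟨h.1.symm, h.2.2, h.2.1⟩⟩ }
  refine ⟨F, fun _ _ h => h.1, fun v hv => ?_⟩
  rw [← card_neighborFinset_eq_degree, ← min_eq_left hv, ← hcard v]
  congr 1
  ext w
  simp only [mem_neighborFinset]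
  refine ⟨fun h => h.2.1, fun hw => ?_⟩
  have hadj : T.Adj v w := (mem_neighborFinset _ _ _).1 (hST v hw)
  exact ⟨hadj, hw, hNS w (mem_nonLeafNeighborFinset.2 ⟨hadj.symm, hv⟩)⟩

lemma IsTree.two_mul_card_nonLeafNeighborFinset_lt_card (hT : T.IsTree) (v : V) :
    2 * #(T.nonLeafNeighborFinset v) < Fintype.card V := by
  set N := T.nonLeafNeighborFinset v
  rcases N.eq_empty_or_nonempty with hN | ⟨w, hw⟩
  · simpa [hN] using Fintype.card_pos_iff.2 ⟨v⟩
  have : Nontrivial V := ⟨v, w, (mem_nonLeafNeighborFinset.1 hw).1.ne⟩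
  -- The excess `∑ u, (deg u - 1)` of a tree is `|V| - 2`; `v` alone contributes `#N - 1` to it
  -- and each vertex of `N` at least `1`.
  have hexcess : ∑ u, (T.degree u - 1) + Fintype.card V = 2 * (Fintype.card V - 1) := by
    have hsum : ∑ u, (T.degree u - 1) + ∑ _u : V, 1 = ∑ u, T.degree u := by
      rw [← sum_add_distrib]
      exact sum_congr rfl fun u _ =>
        Nat.sub_add_cancel (hT.preconnected.degree_pos_of_nontrivial u)
    rw [sum_degrees_eq_twice_card_edges, sum_const, card_univ, smul_eq_mul, mul_one] at hsum
    have := hT.card_edgeFinset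
    omega
  have hvN : v ∉ N := fun h => (mem_nonLeafNeighborFinset.1 h).1.ne rfl
  have hN : #N ≤ ∑ u ∈ N, (T.degree u - 1) := by
    simpa using card_nsmul_le_sum N _ 1 fun u hu =>
      Nat.le_sub_one_of_lt (mem_nonLeafNeighborFinset.1 hu).2
  have hvN_le : ∑ u ∈ insert v N, (T.degree u - 1) ≤ ∑ u, (T.degree u - 1) :=
    sum_le_sum_of_subset (subset_univ _)
  rw [sum_insert hvN] at hvN_le
  have : #N ≤ T.degree v := card_nonLeafNeighborFinset_le_degree v
  have : 0 < #N := card_pos.2 ⟨w, hw⟩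
  omega

end SimpleGraph

open SimpleGraph

lemma IsGoodPacking.degree_eq_two_of_notMem [Fintype V] {T F : SimpleGraph V} {B : Set V}
    (hF : IsGoodPacking T F B) (hcov : CoversAll F B) {v : V} (hv : v ∉ B) :
    F.degree v = 2 := by
  have := hF.2.2.1 v
  have := mt (hF.2.2.2 v) hv
  have := mt (hcov v) hv
  omega

lemma exists_isGoodPacking_coversAll_of_card_nonLeafNeighborFinset_le_two [Fintype V]
    {T : SimpleGraph V} {B : Set V}
    (hT : T.IsAcyclic) (hB : ∀ v, T.degree v ≤ 1 → v ∈ B)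
    (hnl : ∀ v, #(T.nonLeafNeighborFinset v) ≤ 2) :
    ∃ F : SimpleGraph V, IsGoodPacking T F B ∧ CoversAll F B := by
  obtain ⟨F, hFT, hF⟩ := exists_le_degree_eq_two_of_card_nonLeafNeighborFinset_le_two hnl
  have hleaf : ∀ v, F.degree v ≠ 2 → v ∈ B := fun v hv =>
    hB v (by by_contra h; exact hv (hF v (by omega)))
  refine ⟨F, ⟨hFT, fun _ p hp => hT (p.mapLe hFT) (hp.mapLe hFT), fun v => ?_,
    fun v hv => hleaf v (by omega)⟩, fun v hv => hleaf v (by omega)⟩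
  by_cases hv : 2 ≤ T.degree v
  · exact (hF v hv).le
  · exact (degree_le_of_le hFT).trans (by omega)

lemma spider_adj_of_mem {k : Fin 7} (hk : k = 1 ∨ k = 2 ∨ k = 3) {x : Fin 7}
    (h : spider.Adj k x) : x = 0 ∨ x = k + 3 := by
  rw [spider, fromRel_adj] at h
  revert x
  rcases hk with rfl | rfl | rfl <;> decide

lemma IsGoodPacking.spider_adj_zero {F : SimpleGraph (Fin 7)}
    (hF : IsGoodPacking spider F {4, 5, 6}) (hcov : CoversAll F {4, 5, 6}) {k : Fin 7}
    (hk : k = 1 ∨ k = 2 ∨ k = 3) : F.Adj k 0 := by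
  have hdeg : F.degree k = 2 :=
    hF.degree_eq_two_of_notMem hcov (by rcases hk with rfl | rfl | rfl <;> simp)
  have hsub : F.neighborFinset k ⊆ {0, k + 3} := fun x hx => by
    simpa using spider_adj_of_mem hk (hF.1 ((mem_neighborFinset _ _ _).1 hx))
  have heq := eq_of_subset_of_card_le hsub
    ((card_le_two).trans (card_neighborFinset_eq_degree F k ▸ hdeg.ge))
  exact (mem_neighborFinset _ _ _).1 (heq ▸ mem_insert_self 0 _)

/-- For a tree `T` with every vertex of degree ≤ 1 marked: if all degrees are at
most 2 (`T` is a path) then `φ(T) = 0`; if `T` has at most 6 vertices then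
`φ(T) = 0`; and the 7-vertex spider with only its three leaves marked has
`φ(T) > 0` (no good packing covers every vertex). -/
theorem phi_small_trees :
    (∀ (V : Type*) [Fintype V] (T : SimpleGraph V) (B : Set V),
      T.IsTree → (∀ v : V, T.degree v ≤ 1 → v ∈ B) →
      (∀ v : V, T.degree v ≤ 2) →
      ∃ F : SimpleGraph V, IsGoodPacking T F B ∧ CoversAll F B) ∧
    (∀ (V : Type*) [Fintype V] (T : SimpleGraph V) (B : Set V),
      T.IsTree → (∀ v : V, T.degree v ≤ 1 → v ∈ B) →
      Fintype.card V ≤ 6 →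
      ∃ F : SimpleGraph V, IsGoodPacking T F B ∧ CoversAll F B) ∧
    (∀ F : SimpleGraph (Fin 7),
      IsGoodPacking spider F {4, 5, 6} → ¬ CoversAll F {4, 5, 6}) := by
  refine ⟨fun V _ T B hT hB hdeg => ?_, fun V _ T B hT hB hcard => ?_, fun F hF hcov => ?_⟩
  · exact exists_isGoodPacking_coversAll_of_card_nonLeafNeighborFinset_le_two hT.isAcyclic hB
      fun v => (card_nonLeafNeighborFinset_le_degree v).trans (hdeg v)
  · exact exists_isGoodPacking_coversAll_of_card_nonLeafNeighborFinset_le_two hT.isAcyclic hB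
      fun v => by
        have := hT.two_mul_card_nonLeafNeighborFinset_lt_card v
        omega
  · have hsub : ({1, 2, 3} : Finset (Fin 7)) ⊆ F.neighborFinset 0 := fun k hk =>
      (mem_neighborFinset _ _ _).2 (hF.spider_adj_zero hcov (by simpa using hk)).symm
    have h3 : #({1, 2, 3} : Finset (Fin 7)) = 3 := rfl
    have := (card_le_card hsub).trans_eq (card_neighborFinset_eq_degree F 0)
    have := hF.2.2.1 0
    omega
end

section
/- Let λ > 0 and for integer k ≥ 0 define f_k(λ) = e^λ − Σ_{i=0}^{k−1} λ^i/i!. Then λ f_1(λ)/f_2(λ) > 2 for all λ > 0, the function λ ↦ λ f_1(λ)/f_2(λ) is continuous and strictly increasing on (0,∞), tends to 2 as λ → 0+ and to ∞ as λ → ∞; consequently for every real t > 2 the equation λ f_1(λ)/f_2(λ) = t has a unique positive solution λ. -/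
/-! The derivative of `λ f₁(λ) / f₂(λ)` has numerator `f₁(λ)² - λ² e^λ = 4 e^λ (sinh² (λ/2) - (λ/2)²)`,
which is positive, so the mean is strictly increasing. Since `f_n(λ) ~ λⁿ / n!` at `0`, it tends to
`2` there, and by monotonicity it stays above `2`; it is at least `λ` because `f₁ = f₂ + λ`. The
intermediate value theorem and injectivity then give a unique solution for every `t > 2`. -/

open Filter Set

noncomputable def fTrunc (k : ℕ) (lam : ℝ) : ℝ :=
  Real.exp lam - ∑ i ∈ Finset.range k, lam ^ i / Nat.factorial i

open scoped Topology Nat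

theorem fTrunc_zero (x : ℝ) : fTrunc 0 x = Real.exp x := by
  simp [fTrunc]

theorem fTrunc_succ (n : ℕ) (x : ℝ) : fTrunc (n + 1) x = fTrunc n x - x ^ n / n ! := by
  simp only [fTrunc, Finset.sum_range_succ]
  ring

theorem fTrunc_one (x : ℝ) : fTrunc 1 x = Real.exp x - 1 := by
  simp [fTrunc]

theorem fTrunc_two (x : ℝ) : fTrunc 2 x = Real.exp x - 1 - x := by
  simp [fTrunc, Finset.sum_range_succ]
  ring

theorem hasDerivAt_fTrunc_succ (n : ℕ) (x : ℝ) : HasDerivAt (fTrunc (n + 1)) (fTrunc n x) x := by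
  induction n generalizing x with
  | zero =>
    rw [funext (fTrunc_succ 0)]
    simpa [fTrunc_zero] using (Real.hasDerivAt_exp x).sub_const 1
  | succ n ih =>
    have hpow : HasDerivAt (fun y : ℝ => y ^ (n + 1) / (n + 1)!) (x ^ n / n !) x := by
      refine ((hasDerivAt_pow (n + 1) x).div_const _).congr_deriv ?_
      rw [Nat.factorial_succ, Nat.cast_mul]
      field_simp
      push_cast
      ring
    rw [funext (fTrunc_succ (n + 1)), fTrunc_succ]
    exact (ih x).sub hpow

theorem tendsto_fTrunc_div_pow (n : ℕ) :
    Tendsto (fun x => fTrunc n x / x ^ n) (𝓝[≠] 0) (𝓝 (1 / n !)) := by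
  obtain ⟨C, hC⟩ : ∃ C : ℝ, ∀ x : ℝ, |x| ≤ 1 → |fTrunc (n + 1) x| ≤ |x| ^ (n + 1) * C :=
    ⟨_, fun x hx => Real.exp_bound hx n.succ_pos⟩
  rw [← tendsto_sub_nhds_zero_iff]
  refine squeeze_zero_norm' (a := fun x => C * |x|) ?_ ?_
  · filter_upwards [self_mem_nhdsWithin,
      mem_nhdsWithin_of_mem_nhds (Metric.closedBall_mem_nhds (0 : ℝ) one_pos)] with x hx0 hx1
    replace hx0 : x ≠ 0 := hx0
    rw [mem_closedBall_zero_iff, Real.norm_eq_abs] at hx1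
    have hsub : fTrunc n x / x ^ n - 1 / n ! = fTrunc (n + 1) x / x ^ n := by
      rw [fTrunc_succ]
      field_simp
    rw [Real.norm_eq_abs, hsub, abs_div, abs_pow, div_le_iff₀ (pow_pos (abs_pos.2 hx0) n)]
    calc |fTrunc (n + 1) x| ≤ |x| ^ (n + 1) * C := hC x hx1
      _ = C * |x| * |x| ^ n := by ring
  · have h : Tendsto (fun x : ℝ => C * |x|) (𝓝 0) (𝓝 (C * |0|)) :=
      (continuous_const.mul continuous_abs).tendsto 0
    simpa using h.mono_left nhdsWithin_le_nhds

theorem fTrunc_two_pos {x : ℝ} (hx : x ≠ 0) : 0 < fTrunc 2 x := by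
  rw [fTrunc_two]
  linarith [Real.add_one_lt_exp hx]

theorem sq_mul_exp_lt_sq_exp_sub_one {x : ℝ} (hx : x ≠ 0) :
    x ^ 2 * Real.exp x < (Real.exp x - 1) ^ 2 := by
  have hexp : Real.exp x = Real.exp (x / 2) ^ 2 := by
    rw [← Real.exp_nat_mul]
    ring_nf
  have hsinh : Real.exp x - 1 = 2 * Real.exp (x / 2) * Real.sinh (x / 2) := by
    rw [Real.sinh_eq, Real.exp_neg, hexp]
    field_simp
  have hsq : (x / 2) ^ 2 < Real.sinh (x / 2) ^ 2 := by
    rw [sq_lt_sq, Real.abs_sinh, Real.self_lt_sinh_iff]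
    positivity
  rw [hsinh, hexp]
  nlinarith [pow_pos (Real.exp_pos (x / 2)) 2]

noncomputable def truncPoissonMean (lam : ℝ) : ℝ :=
  lam * fTrunc 1 lam / fTrunc 2 lam

theorem hasDerivAt_truncPoissonMean {x : ℝ} (hx : x ≠ 0) :
    HasDerivAt truncPoissonMean ((fTrunc 1 x ^ 2 - x ^ 2 * Real.exp x) / fTrunc 2 x ^ 2) x := by
  have h := ((hasDerivAt_id x).mul (hasDerivAt_fTrunc_succ 0 x)).div (hasDerivAt_fTrunc_succ 1 x)
    (fTrunc_two_pos hx).ne'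
  refine h.congr_deriv ?_
  simp only [zero_add, Nat.reduceAdd, Pi.mul_apply, id, fTrunc_zero, fTrunc_one, fTrunc_two]
  ring

theorem truncPoissonMean_continuousOn : ContinuousOn truncPoissonMean (Ioi 0) :=
  fun _ hx => (hasDerivAt_truncPoissonMean (ne_of_gt hx)).continuousAt.continuousWithinAt

theorem truncPoissonMean_strictMonoOn : StrictMonoOn truncPoissonMean (Ioi 0) := by
  refine strictMonoOn_of_deriv_pos (convex_Ioi 0) truncPoissonMean_continuousOn fun x hx => ?_
  rw [interior_Ioi] at hx
  have hx0 : x ≠ 0 := ne_of_gt hx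
  rw [(hasDerivAt_truncPoissonMean hx0).deriv, fTrunc_one]
  exact div_pos (sub_pos.2 (sq_mul_exp_lt_sq_exp_sub_one hx0)) (pow_pos (fTrunc_two_pos hx0) 2)

theorem tendsto_truncPoissonMean_nhdsNE_zero : Tendsto truncPoissonMean (𝓝[≠] 0) (𝓝 2) := by
  have h := (tendsto_fTrunc_div_pow 1).div (tendsto_fTrunc_div_pow 2) (by norm_num)
  norm_num at h
  refine h.congr' ?_
  filter_upwards [self_mem_nhdsWithin] with x hx
  replace hx : x ≠ 0 := hx
  have := (fTrunc_two_pos hx).ne'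
  rw [Pi.div_apply, truncPoissonMean]
  field_simp

theorem tendsto_truncPoissonMean_nhdsGT_zero : Tendsto truncPoissonMean (𝓝[>] 0) (𝓝 2) :=
  tendsto_truncPoissonMean_nhdsNE_zero.mono_left (nhdsWithin_mono _ fun _ hy => ne_of_gt hy)

theorem self_le_truncPoissonMean {x : ℝ} (hx : 0 < x) : x ≤ truncPoissonMean x := by
  rw [truncPoissonMean, le_div_iff₀ (fTrunc_two_pos hx.ne'), fTrunc_two, fTrunc_one]
  nlinarith

theorem tendsto_truncPoissonMean_atTop : Tendsto truncPoissonMean atTop atTop :=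
  tendsto_atTop_mono' atTop ((eventually_gt_atTop 0).mono fun _ => self_le_truncPoissonMean)
    tendsto_id

theorem two_lt_truncPoissonMean {x : ℝ} (hx : 0 < x) : 2 < truncPoissonMean x := by
  have hhalf : 0 < x / 2 := half_pos hx
  have hle : 2 ≤ truncPoissonMean (x / 2) := by
    refine le_of_tendsto tendsto_truncPoissonMean_nhdsGT_zero ?_
    filter_upwards [Ioo_mem_nhdsGT hhalf] with y hy
    exact (truncPoissonMean_strictMonoOn hy.1 hhalf hy.2).le
  exact hle.trans_lt (truncPoissonMean_strictMonoOn hhalf hx (half_lt_self hx))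

theorem StrictMonoOn.existsUnique_eq_of_tendsto {α β : Type*} [ConditionallyCompleteLinearOrder α]
    [TopologicalSpace α] [OrderTopology α] [DenselyOrdered α] [NoMaxOrder α] [LinearOrder β]
    [TopologicalSpace β] [OrderClosedTopology β] {f : α → β} {a : α} {l t : β}
    (hf : StrictMonoOn f (Ioi a)) (hcont : ContinuousOn f (Ioi a))
    (hl : Tendsto f (𝓝[>] a) (𝓝 l)) (htop : Tendsto f atTop atTop) (ht : l < t) :
    ∃! x, a < x ∧ f x = t := by
  obtain ⟨b, hbt, hab⟩ := ((hl.eventually (eventually_lt_nhds ht)).and self_mem_nhdsWithin).exists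
  obtain ⟨c, htc, hbc⟩ := ((htop.eventually_ge_atTop t).and (eventually_ge_atTop b)).exists
  obtain ⟨x, hx, hxt⟩ := intermediate_value_Icc hbc
    (hcont.mono fun y hy => lt_of_lt_of_le hab hy.1) ⟨hbt.le, htc⟩
  have hax : a < x := lt_of_lt_of_le hab hx.1
  exact ⟨x, ⟨hax, hxt⟩, fun y ⟨hay, hyt⟩ => hf.injOn hay hax (hyt.trans hxt.symm)⟩

/-- The mean `λ f_1(λ)/f_2(λ)` of the Poisson distribution truncated to `≥ 2`
exceeds 2, is continuous and strictly increasing on `(0,∞)`, tends to `2` as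
`λ → 0⁺` and to `∞` as `λ → ∞`; hence for every `t > 2` the equation
`λ f_1(λ)/f_2(λ) = t` has a unique positive solution. -/
theorem truncated_poisson_mean_properties :
    (∀ lam : ℝ, 0 < lam → 2 < lam * fTrunc 1 lam / fTrunc 2 lam) ∧
    ContinuousOn (fun lam : ℝ => lam * fTrunc 1 lam / fTrunc 2 lam) (Set.Ioi 0) ∧
    StrictMonoOn (fun lam : ℝ => lam * fTrunc 1 lam / fTrunc 2 lam) (Set.Ioi 0) ∧
    Tendsto (fun lam : ℝ => lam * fTrunc 1 lam / fTrunc 2 lam)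
      (nhdsWithin 0 (Set.Ioi 0)) (nhds 2) ∧
    Tendsto (fun lam : ℝ => lam * fTrunc 1 lam / fTrunc 2 lam) atTop atTop ∧
    (∀ t : ℝ, 2 < t → ∃! lam : ℝ, 0 < lam ∧ lam * fTrunc 1 lam / fTrunc 2 lam = t) :=
  ⟨fun _ => two_lt_truncPoissonMean, truncPoissonMean_continuousOn,
    truncPoissonMean_strictMonoOn, tendsto_truncPoissonMean_nhdsGT_zero,
    tendsto_truncPoissonMean_atTop, fun _ =>
    truncPoissonMean_strictMonoOn.existsUnique_eq_of_tendsto truncPoissonMean_continuousOn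
      tendsto_truncPoissonMean_nhdsGT_zero tendsto_truncPoissonMean_atTop⟩
end

section
/- Let G be a graph, M* a matching in G, and call a path P in G compatible if for every edge {v,w} ∈ M*, either P contains the edge {v,w} or P is vertex-disjoint from {v,w}. Let P = (v_1, ..., v_s) be a compatible path, and suppose {v_s, v_i} ∈ E(G) where v_i is not an endpoint of any edge of M* and 1 ≤ i ≤ s−2. Then the rotated path P' = (v_1, ..., v_i, v_s, v_{s−1}, ..., v_{i+1}) is also a compatible path in G with the same vertex set as P. -/
/-!
Reversing the tail `ys` keeps every consecutive pair of `xs ++ ys` consecutive, up to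
orientation, except the pair at the junction of `xs` and `ys`, which starts at the last vertex
of `xs`; since that vertex is unmatched, the lost pair is not a matching edge. The one new pair
joins the last vertices of `xs` and `ys`, which is an edge of `G` by assumption.
-/

/-- A list of vertices `P` is a path of `G` compatible with the matching `M`:
for every matching edge `{v,w}`, either `P` traverses it (as consecutive
vertices) or `P` avoids both of its endpoints. -/
def CompatiblePath (G : SimpleGraph V) (M : Set (Sym2 V)) (P : List V) : Prop :=
  P.Nodup ∧ P.Chain' G.Adj ∧
    ∀ v w : V, s(v, w) ∈ M →
      ([v, w] <:+: P ∨ [w, v] <:+: P ∨ (v ∉ P ∧ w ∉ P))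

namespace List

variable {α : Type*}

theorem pair_infix_append_iff {a b : α} {l₁ l₂ : List α} :
    [a, b] <:+: l₁ ++ l₂ ↔
      [a, b] <:+: l₁ ∨ [a, b] <:+: l₂ ∨ (l₁.getLast? = some a ∧ l₂.head? = some b) := by
  rw [infix_append_iff_ne_nil, ← singleton_suffix_iff_getLast?_eq_some,
    ← singleton_prefix_iff_head?_eq_some]
  refine or_congr_right (or_congr_right ⟨?_, fun h => ⟨[a], [b], by simp, by simp, rfl, h⟩⟩)
  rintro ⟨_ | ⟨c, _ | ⟨_, _⟩⟩, _ | ⟨d, _ | ⟨_, _⟩⟩, h₁, h₂, h, hs, hp⟩ <;> simp_all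

theorem IsInfix.pair_append_reverse {a b : α} {xs ys : List α} (h : [a, b] <:+: xs ++ ys)
    (ha : xs.getLast? ≠ some a) :
    [a, b] <:+: xs ++ ys.reverse ∨ [b, a] <:+: xs ++ ys.reverse := by
  rcases pair_infix_append_iff.mp h with hxs | hys | hjoin
  · exact .inl (infix_append_of_infix_left hxs)
  · exact .inr (infix_append_of_infix_right (by simpa using reverse_infix.mpr hys))
  · exact absurd hjoin.1 ha

theorem IsChain.append_reverse {R : α → α → Prop} [Std.Symm R] {xs ys : List α}
    (h : (xs ++ ys).IsChain R) (hjoin : ∀ x ∈ xs.getLast?, ∀ y ∈ ys.getLast?, R x y) :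
    (xs ++ ys.reverse).IsChain R := by
  obtain ⟨hxs, hys, -⟩ := isChain_append.mp h
  refine hxs.append (isChain_reverse.mpr (hys.imp fun _ _ h => Std.Symm.symm _ _ h)) ?_
  simpa only [head?_reverse] using hjoin

end List

theorem CompatiblePath.append_reverse {G : SimpleGraph V} {M : Set (Sym2 V)} {xs ys : List V}
    (hxs : xs ≠ []) (hys : ys ≠ []) (hP : CompatiblePath G M (xs ++ ys))
    (hadj : G.Adj (xs.getLast hxs) (ys.getLast hys))
    (hunmatched : ∀ e ∈ M, xs.getLast hxs ∉ e) :
    CompatiblePath G M (xs ++ ys.reverse) := by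
  obtain ⟨hnodup, hchain, hmatch⟩ := hP
  have hperm : (xs ++ ys.reverse).Perm (xs ++ ys) := (List.reverse_perm ys).append_left xs
  have : Std.Symm G.Adj := G.symm
  have hjunction : ∀ x ∈ xs.getLast?, ∀ y ∈ ys.getLast?, G.Adj x y := by
    simpa [List.getLast?_eq_some_getLast hxs, List.getLast?_eq_some_getLast hys] using hadj
  refine ⟨hperm.nodup_iff.mpr hnodup, hchain.append_reverse hjunction, fun v w hvw => ?_⟩
  have hnot_last : ∀ u ∈ s(v, w), xs.getLast? ≠ some u := by
    rintro u hu h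
    rw [List.getLast?_eq_some_getLast hxs, Option.some_inj] at h
    exact hunmatched _ hvw (h ▸ hu)
  rcases hmatch v w hvw with hvw' | hwv | ⟨hv, hw⟩
  · exact (hvw'.pair_append_reverse (hnot_last v (Sym2.mem_mk_left v w))).elim .inl (.inr ∘ .inl)
  · exact (hwv.pair_append_reverse (hnot_last w (Sym2.mem_mk_right v w))).elim (.inr ∘ .inl) .inl
  · exact .inr (.inr ⟨mt hperm.mem_iff.mp hv, mt hperm.mem_iff.mp hw⟩)

theorem rotation_preserves_compatible_general (G : SimpleGraph V) (M : Set (Sym2 V))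
    (xs ys : List V) (hxs : xs ≠ []) (hys : ys ≠ [])
    (hpath : CompatiblePath G M (xs ++ ys))
    (hadj : G.Adj (ys.getLast hys) (xs.getLast hxs))
    (hunmatched : ∀ e ∈ M, xs.getLast hxs ∉ e) :
    CompatiblePath G M (xs ++ ys.reverse) ∧
      ∀ v : V, v ∈ xs ++ ys.reverse ↔ v ∈ xs ++ ys :=
  ⟨hpath.append_reverse hxs hys hadj.symm hunmatched,
    fun _ => ((List.reverse_perm ys).append_left xs).mem_iff⟩

/-- A Pósa rotation preserves compatibility: if `P = xs ++ ys` is a compatible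
path (with `v_i` the last vertex of `xs`, `v_s` the last vertex of `ys`,
`|ys| ≥ 2`), `{v_s, v_i}` is an edge of `G`, and `v_i` is unmatched by `M`, then
the rotated path `P' = xs ++ ys.reverse` is also a compatible path with the same
vertex set. -/
theorem rotation_preserves_compatible (G : SimpleGraph V) (M : Set (Sym2 V))
    (hM : ∀ e ∈ M, (¬ e.IsDiag) ∧ e ∈ G.edgeSet)
    (hMmatch : ∀ e ∈ M, ∀ f ∈ M, e ≠ f → ∀ v : V, v ∈ e → v ∉ f)
    (xs ys : List V) (hxs : xs ≠ []) (hys : ys ≠ [])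
    (hlen : 2 ≤ ys.length)
    (hpath : CompatiblePath G M (xs ++ ys))
    (hadj : G.Adj (ys.getLast hys) (xs.getLast hxs))
    (hunmatched : ∀ e ∈ M, xs.getLast hxs ∉ e) :
    CompatiblePath G M (xs ++ ys.reverse) ∧
      ∀ v : V, v ∈ xs ++ ys.reverse ↔ v ∈ xs ++ ys :=
  rotation_preserves_compatible_general G M xs ys hxs hys hpath hadj hunmatched
end
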